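/- Let X₁,…,Xₙ ∈ ℝ^d with mean X̄ = (1/n)∑ᵢ Xᵢ and population variance σ² = (1/n)∑ᵢ ‖Xᵢ − X̄‖². If X_{π₁},…,X_{π_t} are sampled uniformly without replacement from {X₁,…,Xₙ} (t ≤ n) and a ∈ ℝ₊^t, then E[‖∑ᵢ₌₁^t aᵢ X_{πᵢ} − (∑ᵢ₌₁^t aᵢ) X̄‖²] ≤ ‖a‖² σ². -/

import Mathlib

open Finset Function Equiv RealInnerProductSpace

/-!
Centre the data, `Y x = X x - X̄`, so that `∑ Y = 0`. Expanding the square, the sum over all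
permutations is `∑ i j, a i a j F (c i) (c j)` with `F u v = ∑ π, ⟪Y (π u), Y (π v)⟫`. Since
permutations act 2-transitively, `F` is constant on the diagonal and constant off it; averaging
over the diagonal gives `F u u = n! σ²`, and averaging off the diagonal gives
`n (n - 1) F u v = n! (‖∑ Y‖² - ∑ ‖Y‖²) ≤ 0`. With nonnegative weights the off-diagonal terms
can only decrease the sum.
-/

namespace Equiv.Perm

variable {α M : Type*} [Fintype α] [DecidableEq α] [AddCommMonoid M]

theorem sum_apply_eq (g : α → M) (u w : α) :
    ∑ π : Perm α, g (π u) = ∑ π : Perm α, g (π w) := by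
  simpa using Equiv.sum_comp (Equiv.mulRight (swap w u)) fun π : Perm α ↦ g (π w)

theorem sum_apply_apply_eq_of_ne (f : α → α → M) {u v u' v' : α} (huv : u ≠ v)
    (huv' : u' ≠ v') :
    ∑ π : Perm α, f (π u) (π v) = ∑ π : Perm α, f (π u') (π v') := by
  obtain ⟨σ, rfl, rfl⟩ :=
    MulAction.is_two_pretransitive_iff.mp (isMultiplyPretransitive α 2) huv' huv
  exact Equiv.sum_comp (Equiv.mulRight σ) fun π : Perm α ↦ f (π u') (π v')

theorem card_smul_sum_apply (g : α → M) (u : α) :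
    Fintype.card α • ∑ π : Perm α, g (π u) = Fintype.card (Perm α) • ∑ x, g x :=
  calc Fintype.card α • ∑ π : Perm α, g (π u)
      = ∑ w : α, ∑ π : Perm α, g (π w) := by
        rw [← card_univ, ← sum_const]
        exact sum_congr rfl fun w _ ↦ sum_apply_eq g u w
    _ = ∑ π : Perm α, ∑ x, g x := by
        rw [sum_comm]
        exact sum_congr rfl fun π _ ↦ Equiv.sum_comp π g
    _ = Fintype.card (Perm α) • ∑ x, g x := by rw [sum_const, card_univ]

theorem card_offDiag_smul_sum_apply_apply (f : α → α → M) {u v : α} (huv : u ≠ v) :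
    #(univ.offDiag : Finset (α × α)) • ∑ π : Perm α, f (π u) (π v) =
      Fintype.card (Perm α) • ∑ p ∈ univ.offDiag, f p.1 p.2 :=
  calc #(univ.offDiag : Finset (α × α)) • ∑ π : Perm α, f (π u) (π v)
      = ∑ p ∈ univ.offDiag, ∑ π : Perm α, f (π p.1) (π p.2) := by
        rw [← sum_const]
        exact sum_congr rfl fun p hp ↦ sum_apply_apply_eq_of_ne f huv (by simpa using hp)
    _ = ∑ π : Perm α, ∑ p ∈ univ.offDiag, f p.1 p.2 := by
        rw [sum_comm]
        refine sum_congr rfl fun π _ ↦ ?_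
        exact sum_nbij' (fun p ↦ (π p.1, π p.2)) (fun p ↦ (π.symm p.1, π.symm p.2))
          (by simp) (by simp) (by simp) (by simp) (by simp)
    _ = Fintype.card (Perm α) • ∑ p ∈ univ.offDiag, f p.1 p.2 := by rw [sum_const, card_univ]

end Equiv.Perm

section InnerProduct

variable {E : Type*} [NormedAddCommGroup E] [InnerProductSpace ℝ E]

theorem norm_sum_smul_sq {ι : Type*} [Fintype ι] (a : ι → ℝ) (Y : ι → E) :
    ‖∑ i, a i • Y i‖ ^ 2 = ∑ i, ∑ j, a i * a j * ⟪Y i, Y j⟫ := by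
  rw [← real_inner_self_eq_norm_sq, sum_inner]
  simp only [inner_sum, real_inner_smul_left]
  simp only [real_inner_smul_right, mul_assoc]

theorem sum_sum_mul_mul_le_of_offDiag_nonpos {ι : Type*} [Fintype ι] [DecidableEq ι]
    {a : ι → ℝ} (ha : ∀ i, 0 ≤ a i) {F : ι → ι → ℝ} {D : ℝ} (hdiag : ∀ i, F i i ≤ D)
    (hoff : ∀ i j, i ≠ j → F i j ≤ 0) :
    ∑ i, ∑ j, a i * a j * F i j ≤ (∑ i, a i ^ 2) * D := by
  rw [sum_mul]
  gcongr with i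
  rw [← add_sum_erase _ _ (mem_univ i)]
  have hrest : ∑ j ∈ univ.erase i, a i * a j * F i j ≤ 0 :=
    sum_nonpos fun j hj ↦
      mul_nonpos_of_nonneg_of_nonpos (mul_nonneg (ha i) (ha j)) (hoff i j (ne_of_mem_erase hj).symm)
  nlinarith [mul_le_mul_of_nonneg_left (hdiag i) (sq_nonneg (a i))]

variable {α : Type*} [Fintype α] [DecidableEq α]

theorem sum_offDiag_inner_eq_neg {Y : α → E} (hY : ∑ x, Y x = 0) :
    ∑ p ∈ univ.offDiag, ⟪Y p.1, Y p.2⟫ = -∑ x, ‖Y x‖ ^ 2 := by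
  have hall : ∑ p ∈ univ ×ˢ univ, ⟪Y p.1, Y p.2⟫ = 0 := by
    rw [sum_product]
    simp [← inner_sum, hY]
  rw [← diag_union_offDiag, sum_union (disjoint_diag_offDiag _), sum_diag] at hall
  simp only [real_inner_self_eq_norm_sq] at hall
  linarith

theorem sum_perm_inner_self (Y : α → E) (u : α) :
    ∑ π : Perm α, ⟪Y (π u), Y (π u)⟫ =
      Fintype.card (Perm α) * ((∑ x, ‖Y x‖ ^ 2) / Fintype.card α) := by
  have hcard : (Fintype.card α : ℝ) ≠ 0 := Nat.cast_ne_zero.mpr (Fintype.card_pos_iff.mpr ⟨u⟩).ne'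
  have h := Perm.card_smul_sum_apply (fun x ↦ ‖Y x‖ ^ 2) u
  simp only [nsmul_eq_mul] at h
  simp only [real_inner_self_eq_norm_sq]
  field_simp
  linarith

theorem sum_perm_inner_nonpos_of_ne {Y : α → E} (hY : ∑ x, Y x = 0) {u v : α} (huv : u ≠ v) :
    ∑ π : Perm α, ⟪Y (π u), Y (π v)⟫ ≤ 0 := by
  have h := Perm.card_offDiag_smul_sum_apply_apply (fun x y ↦ ⟪Y x, Y y⟫) huv
  rw [sum_offDiag_inner_eq_neg hY, nsmul_eq_mul, nsmul_eq_mul] at h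
  have hoff : (0 : ℝ) < #(univ.offDiag : Finset (α × α)) :=
    Nat.cast_pos.mpr (card_pos.mpr ⟨(u, v), by simpa using huv⟩)
  refine nonpos_of_mul_nonpos_right (h ▸ ?_) hoff
  exact mul_nonpos_of_nonneg_of_nonpos (Nat.cast_nonneg _)
    (neg_nonpos.mpr (sum_nonneg fun x _ ↦ sq_nonneg _))

theorem sum_perm_norm_sum_smul_sq_le {ι : Type*} [Fintype ι] {Y : α → E} (hY : ∑ x, Y x = 0)
    {c : ι → α} (hc : Injective c) {a : ι → ℝ} (ha : ∀ i, 0 ≤ a i) :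
    ∑ π : Perm α, ‖∑ i, a i • Y (π (c i))‖ ^ 2 ≤
      Fintype.card (Perm α) * ((∑ i, a i ^ 2) * ((∑ x, ‖Y x‖ ^ 2) / Fintype.card α)) := by
  classical
  calc ∑ π : Perm α, ‖∑ i, a i • Y (π (c i))‖ ^ 2
      = ∑ i, ∑ j, a i * a j * ∑ π : Perm α, ⟪Y (π (c i)), Y (π (c j))⟫ := by
        simp only [norm_sum_smul_sq, mul_sum]
        rw [sum_comm]
        exact sum_congr rfl fun i _ ↦ sum_comm
    _ ≤ (∑ i, a i ^ 2) * (Fintype.card (Perm α) * ((∑ x, ‖Y x‖ ^ 2) / Fintype.card α)) :=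
        sum_sum_mul_mul_le_of_offDiag_nonpos ha (fun i ↦ (sum_perm_inner_self Y (c i)).le)
          fun i j hij ↦ sum_perm_inner_nonpos_of_ne hY (hc.ne hij)
    _ = _ := by ring

end InnerProduct

/-- Weighted sampling without replacement: if `X_{π 1}, …, X_{π t}` are sampled uniformly
without replacement from `{X_1, …, X_n}` (modeled via a uniformly random permutation `π`
of `Fin n` restricted to the first `t` indices) and `a ∈ ℝ₊^t`, then
`E[‖∑ i, a i • X (π i) − (∑ i, a i) • X̄‖²] ≤ ‖a‖² σ²`. -/
theorem weighted_sampling_without_replacement {d n t : ℕ} (ht : t ≤ n)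
    (X : Fin n → EuclideanSpace ℝ (Fin d)) (a : Fin t → ℝ) (ha : ∀ i, 0 ≤ a i)
    (Xbar : EuclideanSpace ℝ (Fin d)) (hXbar : Xbar = (1 / (n : ℝ)) • ∑ i, X i)
    (σ2 : ℝ) (hσ2 : σ2 = (1 / (n : ℝ)) * ∑ i, ‖X i - Xbar‖ ^ 2) :
    (∑ π : Equiv.Perm (Fin n),
        ‖∑ i : Fin t, a i • X (π (Fin.castLE ht i)) - (∑ i : Fin t, a i) • Xbar‖ ^ 2) /
      (Fintype.card (Equiv.Perm (Fin n)) : ℝ)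
      ≤ (∑ i : Fin t, (a i) ^ 2) * σ2 := by
  have hcentered : ∑ i, (X i - Xbar) = 0 := by
    rcases eq_or_ne n 0 with rfl | hn
    · simp
    rw [sum_sub_distrib, sum_const, card_univ, Fintype.card_fin, ← Nat.cast_smul_eq_nsmul ℝ,
      hXbar, smul_smul, one_div, mul_inv_cancel₀ (Nat.cast_ne_zero.mpr hn), one_smul, sub_self]
  have hshift (π : Perm (Fin n)) :
      ∑ i, a i • X (π (Fin.castLE ht i)) - (∑ i, a i) • Xbar =
        ∑ i, a i • (X (π (Fin.castLE ht i)) - Xbar) := by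
    simp only [smul_sub, sum_sub_distrib, sum_smul]
  rw [div_le_iff₀ (by positivity), hσ2]
  simp only [hshift]
  calc _ ≤ _ := sum_perm_norm_sum_smul_sq_le hcentered (Fin.castLE_injective ht) ha
    _ = _ := by simp only [Fintype.card_fin]; ring
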